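/- If G is a P_6-free chordal graph, then its completion graph G_co is a split graph. -/

import Mathlib

open Set

variable {V : Type*}

/-- The closed neighbourhood `N_G[x]` of a vertex. -/
def closedNbhd (G : SimpleGraph V) (x : V) : Set V := insert x (G.neighborSet x)

/-- The closed neighbourhood `N_G[A]` of a set of vertices. -/
def closedNbhdSet (G : SimpleGraph V) (A : Set V) : Set V := ⋃ x ∈ A, closedNbhd G x

/-- `D` is a dominating set of `G`. -/
def Dominates (G : SimpleGraph V) (D : Set V) : Prop := ∀ v, v ∈ closedNbhdSet G D

/-- `IR` is a valid set of irredundant vertices of `G`: every member has an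
inclusion-minimal closed neighbourhood, exactly one representative is kept per class of
vertices with equal closed neighbourhoods, and every vertex with a minimal closed
neighbourhood has a representative in `IR`. The remaining (redundant) vertices form
`IRᶜ = RN(G)`. -/
def IsIrrSet (G : SimpleGraph V) (IR : Set V) : Prop :=
  (∀ x ∈ IR, ∀ y : V, closedNbhd G y ⊆ closedNbhd G x → closedNbhd G y = closedNbhd G x) ∧
  (∀ x ∈ IR, ∀ y ∈ IR, closedNbhd G x = closedNbhd G y → x = y) ∧
  (∀ x : V, (∀ y : V, closedNbhd G y ⊆ closedNbhd G x → closedNbhd G y = closedNbhd G x) →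
    ∃ z ∈ IR, closedNbhd G z = closedNbhd G x)

/-- The completion `G_co` of `G` (w.r.t. the irredundant set `IR`): all edges between
distinct redundant vertices are added. -/
def completion (G : SimpleGraph V) (IR : Set V) : SimpleGraph V where
  Adj x y := G.Adj x y ∨ (x ≠ y ∧ x ∉ IR ∧ y ∉ IR)
  symm := by
    refine ⟨?_⟩
    intro x y h
    rcases h with h | ⟨hne, hx, hy⟩
    · exact Or.inl h.symm
    · exact Or.inr ⟨hne.symm, hy, hx⟩
  loopless := by
    refine ⟨?_⟩
    intro x h
    rcases h with h | ⟨hne, _, _⟩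
    · exact G.irrefl h
    · exact hne rfl

/-- A graph is chordal if it has no induced cycle of length at least 4. -/
def Chordal (G : SimpleGraph V) : Prop :=
  ∀ n : ℕ, 4 ≤ n → IsEmpty (SimpleGraph.cycleGraph n ↪g G)

/-- A graph is `P₆`-free if it has no induced path on 6 vertices. -/
def P6Free (G : SimpleGraph V) : Prop := IsEmpty (SimpleGraph.pathGraph 6 ↪g G)

/-- A graph is a split graph if its vertex set partitions into a clique and an
independent set. -/
def IsSplit (G : SimpleGraph V) : Prop :=
  ∃ C S : Set V, C ∪ S = Set.univ ∧ C ∩ S = ∅ ∧ G.IsClique C ∧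
    S.Pairwise fun a b => ¬ G.Adj a b

/-!
If two vertices `x`, `y` with inclusion-minimal closed neighbourhoods were adjacent, their
closed neighbourhoods would differ, so by minimality `x` has a neighbour `a ∉ N[y]` and `y` a
neighbour `b ∉ N[x]`; by minimality of `N[x]` and `N[y]` again, `a` has a neighbour
`a' ∉ N[x]` and `b` a neighbour `b' ∉ N[y]`. In a chordal graph every chord of the path
`a' a x y b b'` would close an induced cycle of length 4, 5 or 6, so this path is an induced
`P₆`. Hence the irredundant vertices are pairwise non-adjacent: they are the independent side
of `G_co`, whose redundant vertices form a clique by construction.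
-/

open SimpleGraph

lemma cycleGraph_adj_succ_succ {n : ℕ} {i j : Fin (n + 1)} :
    (cycleGraph (n + 2)).Adj i.succ j.succ ↔ (pathGraph (n + 1)).Adj i j := by
  rw [cycleGraph_adj', pathGraph_adj]
  have hsub : ∀ k l : Fin (n + 1), (k.succ - l.succ).val = 1 ↔ k.val = l.val + 1 := by
    intro k l
    rcases le_or_gt l.succ k.succ with h | h
    · rw [Fin.coe_sub_iff_le.mpr h]
      simp only [Fin.val_succ]
      omega
    · rw [Fin.coe_sub_iff_lt.mpr h]
      rw [Fin.lt_def, Fin.val_succ, Fin.val_succ] at h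
      simp only [Fin.val_succ]
      omega
  rw [hsub, hsub]
  omega

lemma cycleGraph_adj_zero_succ {n : ℕ} {j : Fin (n + 3)} :
    (cycleGraph (n + 4)).Adj 0 j.succ ↔ j = 0 ∨ j = Fin.last (n + 2) := by
  rw [cycleGraph_adj', Fin.coe_sub_iff_lt.mpr (Fin.succ_pos j), sub_zero, Fin.ext_iff,
    Fin.ext_iff]
  simp only [Fin.val_zero, Fin.val_succ, Fin.val_last]
  omega

lemma pathGraph_adj_succ_succ {n : ℕ} {i j : Fin (n + 1)} :
    (pathGraph (n + 2)).Adj i.succ j.succ ↔ (pathGraph (n + 1)).Adj i j := by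
  simp only [pathGraph_adj, Fin.val_succ, Nat.add_right_cancel_iff]

lemma pathGraph_adj_zero_succ {n : ℕ} {j : Fin (n + 1)} :
    (pathGraph (n + 2)).Adj 0 j.succ ↔ j = 0 := by
  simp only [pathGraph_adj, Fin.val_succ, Fin.val_zero, Fin.ext_iff]
  omega

variable {G : SimpleGraph V} {x y a b a' b' : V}

lemma mem_closedNbhd : y ∈ closedNbhd G x ↔ y = x ∨ G.Adj x y := Iff.rfl

lemma self_mem_closedNbhd (G : SimpleGraph V) (x : V) : x ∈ closedNbhd G x := Or.inl rfl

lemma SimpleGraph.Adj.mem_closedNbhd (h : G.Adj x y) : y ∈ closedNbhd G x := Or.inr h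

lemma mem_closedNbhd_comm : y ∈ closedNbhd G x ↔ x ∈ closedNbhd G y := by
  simp only [mem_closedNbhd, eq_comm, G.adj_comm]

def SimpleGraph.Embedding.finCons {m : ℕ} {H : SimpleGraph (Fin (m + 1))}
    {H' : SimpleGraph (Fin m)} (p : H' ↪g G) (w : V) (hw : w ∉ Set.range p)
    (hsucc : ∀ i j, H.Adj i.succ j.succ ↔ H'.Adj i j)
    (hzero : ∀ j, H.Adj 0 j.succ ↔ G.Adj w (p j)) : H ↪g G where
  toFun := Fin.cons w p
  inj' := Fin.cons_injective_iff.mpr ⟨hw, p.injective⟩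
  map_rel_iff' := by
    intro i j
    cases i using Fin.cases <;> cases j using Fin.cases <;>
      simp [hsucc, hzero, H.adj_comm _ 0, G.adj_comm _ w]

def IsInducedPath (G : SimpleGraph V) {n : ℕ} (f : Fin n → V) : Prop :=
  ∃ e : pathGraph n ↪g G, ⇑e = f

lemma isInducedPath_singleton (v : V) : IsInducedPath G ![v] :=
  ⟨⟨⟨fun _ => v, Function.injective_of_subsingleton _⟩,
    fun {i j} => by simp [Subsingleton.elim i j]⟩, by ext i; simp [Subsingleton.elim i 0]⟩

lemma IsInducedPath.vecCons {n : ℕ} {f : Fin (n + 1) → V} (hf : IsInducedPath G f) {w : V}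
    (h0 : G.Adj w (f 0)) (hrest : ∀ i : Fin n, f i.succ ∉ closedNbhd G w) :
    IsInducedPath G (Matrix.vecCons w f) := by
  obtain ⟨p, rfl⟩ := hf
  refine ⟨p.finCons w ?_ (fun _ _ => pathGraph_adj_succ_succ) fun j => ?_, rfl⟩
  · rintro ⟨j, hj⟩
    rcases Fin.eq_zero_or_eq_succ j with rfl | ⟨i, rfl⟩
    · exact h0.ne hj.symm
    · exact hrest i (hj ▸ self_mem_closedNbhd G w)
  · rw [pathGraph_adj_zero_succ]
    rcases Fin.eq_zero_or_eq_succ j with rfl | ⟨i, rfl⟩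
    · simpa using h0
    · simpa using fun h => hrest i h.mem_closedNbhd

/-- Otherwise `w` closes the path into an induced cycle of length at least `4`. -/
theorem Chordal.last_notMem_closedNbhd (hG : Chordal G) {n : ℕ} {f : Fin (n + 3) → V}
    (hf : IsInducedPath G f) {w : V} (h0 : G.Adj w (f 0))
    (hint : ∀ i : Fin (n + 1), f i.castSucc.succ ∉ closedNbhd G w) :
    f (Fin.last _) ∉ closedNbhd G w := by
  obtain ⟨p, rfl⟩ := hf
  have hcases : ∀ j : Fin (n + 3),
      j = 0 ∨ j = Fin.last _ ∨ ∃ i : Fin (n + 1), j = i.castSucc.succ := by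
    intro j
    rcases Fin.eq_zero_or_eq_succ j with rfl | ⟨k, rfl⟩
    · exact Or.inl rfl
    rcases Fin.eq_castSucc_or_eq_last k with ⟨i, rfl⟩ | rfl
    · exact Or.inr (Or.inr ⟨i, rfl⟩)
    · exact Or.inr (Or.inl rfl)
  rintro (hw | hlast)
  · have : (pathGraph (n + 3)).Adj (Fin.last _) 0 := p.map_adj_iff.mp (hw ▸ h0)
    simp [pathGraph_adj] at this
  refine (hG (n + 4) (by omega)).false (p.finCons w ?_ (fun _ _ => cycleGraph_adj_succ_succ) ?_)
  · rintro ⟨j, hj⟩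
    rcases hcases j with rfl | rfl | ⟨i, rfl⟩
    · exact h0.ne hj.symm
    · exact hlast.ne hj.symm
    · exact hint i (hj ▸ self_mem_closedNbhd G w)
  · intro j
    rw [cycleGraph_adj_zero_succ]
    rcases hcases j with rfl | rfl | ⟨i, rfl⟩
    · simpa using h0
    · simpa using hlast
    · refine iff_of_false ?_ fun h => hint i h.mem_closedNbhd
      simp only [Fin.ext_iff, Fin.val_succ, Fin.val_castSucc, Fin.val_zero, Fin.val_last]
      omega

lemma Chordal.notMem_closedNbhd_of_private_neighbors (hG : Chordal G) (hxy : G.Adj x y)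
    (hxa : G.Adj x a) (hay : a ∉ closedNbhd G y) (hyb : G.Adj y b) (hbx : b ∉ closedNbhd G x)
    (hab : b ∉ closedNbhd G a) (haa' : G.Adj a a') (ha'x : a' ∉ closedNbhd G x) :
    y ∉ closedNbhd G a' ∧ b ∉ closedNbhd G a' := by
  rw [mem_closedNbhd_comm] at hay ha'x
  have hxyb : IsInducedPath G ![x, y, b] :=
    ((isInducedPath_singleton b).vecCons hyb (by simp)).vecCons hxy (by simp [hbx])
  have haxy : IsInducedPath G ![a, x, y] :=
    ((isInducedPath_singleton y).vecCons hxy (by simp)).vecCons hxa.symm (by simp [hay])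
  have haxyb : IsInducedPath G ![a, x, y, b] :=
    hxyb.vecCons hxa.symm (by simp [Fin.forall_fin_succ, hay, hab])
  have ha'y : y ∉ closedNbhd G a' := by
    simpa using hG.last_notMem_closedNbhd haxy haa'.symm (by simp [ha'x])
  have ha'b : b ∉ closedNbhd G a' := by
    simpa using hG.last_notMem_closedNbhd haxyb haa'.symm
      (by simp [Fin.forall_fin_succ, ha'x, ha'y])
  exact ⟨ha'y, ha'b⟩

theorem Chordal.isInducedPath_of_private_neighbors (hG : Chordal G) (hxy : G.Adj x y)
    (hxa : G.Adj x a) (hay : a ∉ closedNbhd G y) (hyb : G.Adj y b) (hbx : b ∉ closedNbhd G x)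
    (haa' : G.Adj a a') (ha'x : a' ∉ closedNbhd G x)
    (hbb' : G.Adj b b') (hb'y : b' ∉ closedNbhd G y) :
    IsInducedPath G ![b', b, y, x, a, a'] := by
  have hab : b ∉ closedNbhd G a := by
    have hxyb : IsInducedPath G ![x, y, b] :=
      ((isInducedPath_singleton b).vecCons hyb (by simp)).vecCons hxy (by simp [hbx])
    simpa using hG.last_notMem_closedNbhd hxyb hxa.symm
      (by simpa [mem_closedNbhd_comm] using hay)
  obtain ⟨ha'y, ha'b⟩ :=
    hG.notMem_closedNbhd_of_private_neighbors hxy hxa hay hyb hbx hab haa' ha'x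
  obtain ⟨hb'x, hb'a⟩ := hG.notMem_closedNbhd_of_private_neighbors hxy.symm hyb hbx hxa hay
    (mem_closedNbhd_comm.not.mp hab) hbb' hb'y
  rw [mem_closedNbhd_comm] at ha'y ha'b hbx hab hb'y
  have hbyxaa' : IsInducedPath G ![b, y, x, a, a'] :=
    ((((isInducedPath_singleton a').vecCons haa' (by simp)).vecCons hxa (by simp [ha'x])).vecCons
      hxy.symm (by simp [Fin.forall_fin_succ, hay, ha'y])).vecCons hyb.symm
      (by simp [Fin.forall_fin_succ, hbx, hab, ha'b])
  have hb'a' : a' ∉ closedNbhd G b' := by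
    simpa using hG.last_notMem_closedNbhd hbyxaa' hbb'.symm
      (by simp [Fin.forall_fin_succ, hb'y, hb'x, hb'a])
  exact hbyxaa'.vecCons hbb'.symm (by simp [Fin.forall_fin_succ, hb'y, hb'x, hb'a, hb'a'])

def HasMinimalClosedNbhd (G : SimpleGraph V) (x : V) : Prop :=
  ∀ y, closedNbhd G y ⊆ closedNbhd G x → closedNbhd G y = closedNbhd G x

lemma HasMinimalClosedNbhd.exists_adj_notMem {u : V} (hx : HasMinimalClosedNbhd G x)
    (hu : u ∈ closedNbhd G x) (hne : closedNbhd G u ≠ closedNbhd G x) :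
    ∃ u', G.Adj u u' ∧ u' ∉ closedNbhd G x := by
  obtain ⟨u', hu', hu'x⟩ := Set.not_subset.mp (mt (hx u) hne)
  exact ⟨u', hu'.resolve_left (by rintro rfl; exact hu'x hu), hu'x⟩

theorem Chordal.closedNbhd_eq_of_adj (hG : Chordal G) (hP : P6Free G)
    (hx : HasMinimalClosedNbhd G x) (hy : HasMinimalClosedNbhd G y) (hxy : G.Adj x y) :
    closedNbhd G x = closedNbhd G y := by
  by_contra hne
  obtain ⟨a, hxa, hay⟩ := hy.exists_adj_notMem hxy.symm.mem_closedNbhd hne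
  obtain ⟨b, hyb, hbx⟩ := hx.exists_adj_notMem hxy.mem_closedNbhd (Ne.symm hne)
  obtain ⟨a', haa', ha'x⟩ := hx.exists_adj_notMem hxa.mem_closedNbhd fun h =>
    hay (mem_closedNbhd_comm.mp (h ▸ hxy.mem_closedNbhd))
  obtain ⟨b', hbb', hb'y⟩ := hy.exists_adj_notMem hyb.mem_closedNbhd fun h =>
    hbx (mem_closedNbhd_comm.mp (h ▸ hxy.symm.mem_closedNbhd))
  obtain ⟨e, -⟩ := hG.isInducedPath_of_private_neighbors hxy hxa hay hyb hbx haa' ha'x hbb' hb'y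
  exact hP.false e

lemma IsIrrSet.not_adj {IR : Set V} (hIR : IsIrrSet G IR) (hG : Chordal G) (hP : P6Free G)
    (hx : x ∈ IR) (hy : y ∈ IR) : ¬ G.Adj x y := fun h =>
  h.ne (hIR.2.1 x hx y hy (hG.closedNbhd_eq_of_adj hP (hIR.1 x hx) (hIR.1 y hy) h))

lemma isSplit_completion {IR : Set V} (hIR : IR.Pairwise fun x y => ¬ G.Adj x y) :
    IsSplit (completion G IR) := by
  refine ⟨IRᶜ, IR, compl_union_self IR, compl_inter_self IR,
    fun u hu v hv huv => Or.inr ⟨huv, hu, hv⟩, ?_⟩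
  rintro u hu v hv huv (hadj | ⟨-, hu', -⟩)
  · exact hIR hu hv huv hadj
  · exact hu' hu

theorem stmt_16_general (G : SimpleGraph V) (hch : Chordal G) (hp6 : P6Free G)
    (IR : Set V) (hIR : IsIrrSet G IR) :
    IsSplit (completion G IR) :=
  isSplit_completion fun _ hx _ hy _ => hIR.not_adj hch hp6 hx hy

/-- The completion of a `P₆`-free chordal graph is a split graph. -/
theorem stmt_16 [Fintype V] (G : SimpleGraph V) (hch : Chordal G) (hp6 : P6Free G)
    (IR : Set V) (hIR : IsIrrSet G IR) :
    IsSplit (completion G IR) :=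
  stmt_16_general G hch hp6 IR hIR
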